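/- There exists a McNaughton function φ in one variable with φ(0) = 0 which is not homogeneous. Concretely, φ(x) = min(x, ρ(2x − 1)) on [0,1] satisfies φ(0) = 0, but φ does not agree on [0,1] with any homogeneous normal-form McNaughton function min_{i∈I} max_{j∈Jᵢ} ρ(aᵢⱼ·x) with integer coefficients aᵢⱼ. -/
import Mathlib


/-- The truncation function `ρ(y) = max(0, min(1, y))`. -/
noncomputable def rho (y : ℝ) : ℝ := max 0 (min 1 y)

/-- The one-variable normal-form McNaughton function
`φ(x) = min_i max_j ρ(aᵢⱼ·x + bᵢⱼ)` with integer data `a`, `b`. -/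
noncomputable def mcN1 (k : ℕ) (m : Fin (k + 1) → ℕ)
    (a b : (i : Fin (k + 1)) → Fin (m i + 1) → ℤ) (x : ℝ) : ℝ :=
  Finset.univ.inf' Finset.univ_nonempty fun i =>
    Finset.univ.sup' Finset.univ_nonempty fun j =>
      rho ((a i j : ℝ) * x + (b i j : ℝ))

lemma rho_nonneg (y : ℝ) : 0 ≤ rho y := le_max_left _ _

lemma rho_of_nonpos {y : ℝ} (hy : y ≤ 0) : rho y = 0 :=
  max_eq_left ((min_le_right 1 y).trans hy)

/-- `φ(x) = min(x, ρ(2x − 1))` satisfies `φ(0) = 0` but does not agree on `[0,1]`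
with any homogeneous normal-form McNaughton function. -/
theorem stmt11 :
    min (0 : ℝ) (rho (2 * 0 - 1)) = 0 ∧
    ¬∃ (k : ℕ) (m : Fin (k + 1) → ℕ)
        (a : (i : Fin (k + 1)) → Fin (m i + 1) → ℤ),
      ∀ x ∈ Set.Icc (0 : ℝ) 1,
        min x (rho (2 * x - 1)) = mcN1 k m a (fun _ _ => 0) x := by
  constructor
  · rw [rho_of_nonpos (by norm_num)]
    simp
  · rintro ⟨k, m, a, h⟩
    -- evaluate at x = 1/2
    have h2 := h (1/2) (by norm_num)
    have hphi2 : min (1/2 : ℝ) (rho (2 * (1/2) - 1)) = 0 := by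
      rw [show (2 * (1/2 : ℝ) - 1) = 0 by norm_num, rho_of_nonpos le_rfl]
      norm_num
    rw [hphi2] at h2
    have h2' : (Finset.univ.inf' Finset.univ_nonempty fun i =>
        Finset.univ.sup' Finset.univ_nonempty fun j =>
          rho ((a i j : ℝ) * (1/2) + ((0:ℤ) : ℝ))) = 0 := by
      simpa [mcN1] using h2.symm
    obtain ⟨i0, -, hi0⟩ := Finset.exists_mem_eq_inf' (Finset.univ_nonempty)
      (fun i => Finset.univ.sup' Finset.univ_nonempty fun j =>
        rho ((a i j : ℝ) * (1/2) + ((0:ℤ) : ℝ)))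
    rw [hi0] at h2'
    -- every a i0 j ≤ 0
    have hneg : ∀ j, (a i0 j : ℝ) ≤ 0 := by
      intro j
      have hle : rho ((a i0 j : ℝ) * (1/2) + ((0:ℤ) : ℝ)) ≤ 0 := by
        rw [← h2']
        exact Finset.le_sup' (fun j => rho ((a i0 j : ℝ) * (1/2) + ((0:ℤ) : ℝ))) (Finset.mem_univ j)
      have hr0 : rho ((a i0 j : ℝ) * (1/2) + ((0:ℤ) : ℝ)) = 0 :=
        le_antisymm hle (rho_nonneg _)
      by_contra hpos
      push_neg at hpos
      have hy : (0:ℝ) < (a i0 j : ℝ) * (1/2) + ((0:ℤ) : ℝ) := by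
        push_cast; linarith
      have : (0:ℝ) < rho ((a i0 j : ℝ) * (1/2) + ((0:ℤ) : ℝ)) :=
        lt_max_of_lt_right (lt_min one_pos hy)
      linarith [hr0 ▸ this]
    -- evaluate at x = 1
    have h1 := h 1 (by norm_num)
    have hphi1 : min (1:ℝ) (rho (2 * 1 - 1)) = 1 := by
      have : rho (2 * (1:ℝ) - 1) = 1 := by
        rw [show (2 * (1:ℝ) - 1) = 1 by norm_num]
        unfold rho; norm_num
      rw [this]; norm_num
    rw [hphi1] at h1
    have hle1 : mcN1 k m a (fun _ _ => 0) 1 ≤ 0 := by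
      unfold mcN1
      refine le_trans (Finset.inf'_le _ (Finset.mem_univ i0)) ?_
      refine Finset.sup'_le _ _ fun j _ => ?_
      refine le_of_eq (rho_of_nonpos ?_)
      push_cast
      have := hneg j
      linarith
    rw [← h1] at hle1
    linarith
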